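/- arXiv:1701.08026 — 2 statements merged into one kernel-verified Lean document; each statement's English description precedes it below -/
import Mathlib

section
/- For the simple harmonic oscillator with ω > 0 and E > 0, the eikonal σ_E(Q,Q') = |∫_{Q'}^{Q} √(2E − ω²q²) dq| satisfies σ_E(Q,Q') ≤ πE/ω for all Q, Q' in the interval [−√(2E)/ω, √(2E)/ω], with equality when Q = √(2E)/ω and Q' = −√(2E)/ω. -/
open intervalIntegral Real Set

/-! The integrand `√(2E − ω²q²)` is nonnegative, so the eikonal between two points of the allowed
interval is largest when they are its endpoints. There the integral is `ω` times the area of a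
half disc of radius `√(2E)/ω`, namely `ω · π (2E/ω²) / 2 = πE/ω`. -/

lemma abs_integral_le_integral_of_nonneg_of_mem_Icc {f : ℝ → ℝ} {a b u v : ℝ}
    (hf : ∀ x, 0 ≤ f x) (hfi : IntervalIntegrable f MeasureTheory.volume a b)
    (hu : u ∈ Icc a b) (hv : v ∈ Icc a b) :
    |∫ x in u..v, f x| ≤ ∫ x in a..b, f x := by
  wlog huv : u ≤ v generalizing u v
  · rw [integral_symm, abs_neg]
    exact this hv hu (le_of_not_ge huv)
  rw [abs_of_nonneg (integral_nonneg huv fun x _ => hf x)]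
  exact integral_mono_interval hu.1 huv hv.2 (.of_forall hf) hfi

lemma integral_sqrt_sq_sub_sq {r : ℝ} (hr : 0 ≤ r) :
    ∫ x in -r..r, √(r ^ 2 - x ^ 2) = π * r ^ 2 / 2 := by
  rcases hr.eq_or_lt with rfl | hr
  · simp
  have hscale : ∀ x, √(r ^ 2 - x ^ 2) = r * √(1 - (x / r) ^ 2) := by
    intro x
    rw [← sqrt_sq hr.le, ← sqrt_mul (sq_nonneg r), sqrt_sq hr.le]
    field_simp
  simp only [hscale, integral_const_mul]
  rw [integral_comp_div (fun t => √(1 - t ^ 2)) hr.ne', neg_div, div_self hr.ne',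
    integral_sqrt_one_sub_sq, smul_eq_mul]
  ring

lemma integral_sqrt_sub_mul_sq {c ω : ℝ} (hc : 0 ≤ c) (hω : 0 < ω) :
    ∫ q in -(√c / ω)..√c / ω, √(c - ω ^ 2 * q ^ 2) = π * c / (2 * ω) := by
  have hscale : ∀ q, √(c - ω ^ 2 * q ^ 2) = ω * √((√c / ω) ^ 2 - q ^ 2) := by
    intro q
    rw [← sqrt_sq hω.le, ← sqrt_mul (sq_nonneg ω), sqrt_sq hω.le, div_pow, sq_sqrt hc]
    field_simp
  simp only [hscale, integral_const_mul]
  rw [integral_sqrt_sq_sub_sq (by positivity), div_pow, sq_sqrt hc]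
  field_simp

/-- Myers-type diameter bound for the harmonic oscillator: the eikonal
`σ_E(Q,Q') = |∫_{Q'}^{Q} √(2E − ω²q²) dq|` is at most `πE/ω` on the allowed
interval `[−√(2E)/ω, √(2E)/ω]`, with equality for the endpoints. -/
theorem sho_eikonal_diameter (E ω : ℝ) (hE : 0 < E) (hω : 0 < ω) :
    (∀ Q ∈ Set.Icc (-(Real.sqrt (2*E) / ω)) (Real.sqrt (2*E) / ω),
     ∀ Q' ∈ Set.Icc (-(Real.sqrt (2*E) / ω)) (Real.sqrt (2*E) / ω),
      |∫ q in Q'..Q, Real.sqrt (2*E - ω^2 * q^2)| ≤ Real.pi * E / ω) ∧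
    |∫ q in (-(Real.sqrt (2*E) / ω))..(Real.sqrt (2*E) / ω),
        Real.sqrt (2*E - ω^2 * q^2)| = Real.pi * E / ω := by
  have hdiam : ∫ q in (-(√(2 * E) / ω))..(√(2 * E) / ω), √(2 * E - ω ^ 2 * q ^ 2)
      = π * E / ω := by
    rw [integral_sqrt_sub_mul_sq (by positivity) hω]
    field_simp
  refine ⟨fun Q hQ Q' hQ' => hdiam ▸ ?_, by rw [hdiam, abs_of_pos (by positivity)]⟩
  exact abs_integral_le_integral_of_nonneg_of_mem_Icc (fun q => sqrt_nonneg _)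
    ((by fun_prop : Continuous _).intervalIntegrable _ _) hQ' hQ
end

section
/- There exist real numbers k₁, k₂ < 0 and B > 0 with |k₂| < B²/4 < |k₁| (so the curvature eigenvalue k₁ + B²/4 is negative) but nevertheless B²/2 > √(|k₁||k₂|) + (|k₁| + |k₂|)/2 (so the system is stable). Hence positivity of curvature is not necessary for stability. -/
/-!
Since `√(ab) + (a + b)/2 = (√a + √b)²/2`, the stability criterion reads `B > √|k₁| + √|k₂|`,
while the curvature eigenvalue `k₁ + B²/4` is negative iff `B < 2√|k₁|`. Both hold as soon as
`|k₂| < |k₁|`; `k₁ = -9`, `k₂ = -1`, `B = 5` gives `√9 + √1 = 4 < 5 < 6 = 2√9`.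
-/

/-- Positivity of curvature is not necessary for stability: there exist
`k₁, k₂ < 0` and `B > 0` with `|k₂| < B²/4 < |k₁|` (a negative curvature
eigenvalue) yet `B²/2 > √(|k₁||k₂|) + (|k₁|+|k₂|)/2` (stability). -/
theorem stability_without_positive_curvature :
    ∃ k₁ k₂ B : ℝ, k₁ < 0 ∧ k₂ < 0 ∧ 0 < B ∧
      |k₂| < B^2 / 4 ∧ B^2 / 4 < |k₁| ∧
      Real.sqrt (|k₁| * |k₂|) + (|k₁| + |k₂|) / 2 < B^2 / 2 := by
  have hsqrt : Real.sqrt (|(-9 : ℝ)| * |-1|) = 3 := by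
    rw [show |(-9 : ℝ)| * |-1| = 3 ^ 2 by norm_num]
    exact Real.sqrt_sq (by norm_num)
  refine ⟨-9, -1, 5, by norm_num, by norm_num, by norm_num, by norm_num, by norm_num, ?_⟩
  rw [hsqrt]
  norm_num
end
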